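/- Let G be a finite simple graph on the vertex set {1,…,n} with m edges. Then P_G has a unique minimal system of binomial generators, namely {f_{ij} : {i,j} an edge of G, i<j}: this set of m binomials generates P_G, every set of binomials generating P_G contains, for each edge {i,j}, either f_{ij} or −f_{ij} (each f_{ij} is indispensable), and no proper subset of {f_{ij}} generates P_G. -/

import Mathlib

/-!
Giving `x_{kl}` row degree `e_k` and column degree `e_l` makes `P_G` bigraded, so the two
monomials of a binomial in `P_G` have the same row sums and the same column sums. If `f_{ij}` lies
in the ideal generated by a set `F` of binomials, then some element of `F` has a monomial dividing
`x_{ii} x_{jj}`, because every element of the ideal is a combination of multiples of elements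
of `F`. Comparing row and column sums, the only binomial of that kind in `P_G` is `± f_{ij}`.
No proper subset of the `f_{ij}` generates `P_G`, since distinct edges give generators that do
not agree up to sign.
-/

open MvPolynomial

/-- The set of variables of `S`: one variable `x_{ii}` for each vertex `i` of `G` and two
variables `x_{ij}`, `x_{ji}` for each edge `{i,j}` of `G`. -/
abbrev VarSet (n : ℕ) (G : SimpleGraph (Fin n)) : Type :=
  {p : Fin n × Fin n // p.1 = p.2 ∨ G.Adj p.1 p.2}

/-- The diagonal 2-minor `f_{ij} = x_{ii} x_{jj} - x_{ij} x_{ji}`. -/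
noncomputable def fij (K : Type) [Field K] {n : ℕ} {G : SimpleGraph (Fin n)}
    {i j : Fin n} (h : G.Adj i j) : MvPolynomial (VarSet n G) K :=
  X ⟨(i, i), Or.inl rfl⟩ * X ⟨(j, j), Or.inl rfl⟩ -
    X ⟨(i, j), Or.inr h⟩ * X ⟨(j, i), Or.inr h.symm⟩

/-- The generating set `{f_{ij} : {i,j} an edge of G, i < j}`. -/
def genSet (K : Type) [Field K] (n : ℕ) (G : SimpleGraph (Fin n)) :
    Set (MvPolynomial (VarSet n G) K) :=
  {f | ∃ i j : Fin n, ∃ h : G.Adj i j, i < j ∧ f = fij K h}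

/-- The ideal `P_G` generated by the diagonal 2-minors `f_{ij}` for edges `{i,j}`, `i < j`. -/
noncomputable def PG (K : Type) [Field K] (n : ℕ) (G : SimpleGraph (Fin n)) :
    Ideal (MvPolynomial (VarSet n G) K) :=
  Ideal.span (genSet K n G)

/-- `f` is a binomial: a difference `x^u - x^v` of two distinct monomials. -/
def IsBinomial (K : Type) [Field K] {σ : Type} (f : MvPolynomial σ K) : Prop :=
  ∃ u v : σ →₀ ℕ, u ≠ v ∧ f = monomial u 1 - monomial v 1

namespace Multiset

variable {τ : Type*}

theorem pair_eq_pair_iff {a b i j : τ} :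
    ({a, b} : Multiset τ) = {i, j} ↔ a = i ∧ b = j ∨ a = j ∧ b = i := by
  simp only [insert_eq_cons, cons_eq_cons, singleton_inj, singleton_eq_cons_iff,
    exists_eq_right_right, and_true]
  constructor
  · tauto
  · rintro (h | ⟨rfl, rfl⟩)
    · exact Or.inl h
    · by_cases h : a = b
      · exact Or.inl ⟨h, h.symm⟩
      · exact Or.inr ⟨h, rfl, rfl⟩

/-- Read as a matrix over `ℕ`, a multiset of positions has row sums `map Prod.fst` and column sums
`map Prod.snd`. -/
theorem eq_diag_and_eq_cross_of_map_fst_eq_of_map_snd_eq {i j : τ}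
    {c d : Multiset (τ × τ)} (hc : c ≤ {(i, i), (j, j)}) (hcd : c ≠ d)
    (hfst : c.map Prod.fst = d.map Prod.fst) (hsnd : c.map Prod.snd = d.map Prod.snd) :
    c = {(i, i), (j, j)} ∧ d = {(i, j), (j, i)} := by
  have hcard : card d = card c := by rw [← card_map Prod.fst d, ← hfst, card_map]
  have hc2 : card c ≤ 2 := by simpa using card_le_card hc
  obtain h0 | h1 | h2 : card c = 0 ∨ card c = 1 ∨ card c = 2 := by omega
  · exact absurd ((card_eq_zero.mp h0).trans (card_eq_zero.mp (hcard.trans h0)).symm) hcd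
  · obtain ⟨x, rfl⟩ := card_eq_one.mp h1
    obtain ⟨y, rfl⟩ := card_eq_one.mp (hcard.trans h1)
    simp only [map_singleton, singleton_inj] at hfst hsnd
    exact absurd (congrArg _ (Prod.ext hfst hsnd)) hcd
  · obtain rfl : c = {(i, i), (j, j)} := eq_of_le_of_card_le hc (by simp [h2])
    obtain ⟨⟨a, b⟩, ⟨a', b'⟩, rfl⟩ := card_eq_two.mp (hcard.trans h2)
    change ({i, j} : Multiset τ) = {a, a'} at hfst
    change ({i, j} : Multiset τ) = {b, b'} at hsnd
    refine ⟨rfl, ?_⟩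
    rcases pair_eq_pair_iff.mp hfst.symm with ⟨rfl, rfl⟩ | ⟨rfl, rfl⟩ <;>
      rcases pair_eq_pair_iff.mp hsnd.symm with ⟨rfl, rfl⟩ | ⟨rfl, rfl⟩
    · exact absurd rfl hcd
    · rfl
    · exact pair_comm _ _
    · exact absurd (pair_comm _ _) hcd

end Multiset

namespace MvPolynomial

variable {σ τ R : Type*}

theorem exists_mem_le_coeff_ne_zero_of_mem_span [CommSemiring R] {F : Set (MvPolynomial σ R)}
    {g : MvPolynomial σ R} {m : σ →₀ ℕ} (hg : g ∈ Ideal.span F) (hm : coeff m g ≠ 0) :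
    ∃ f ∈ F, ∃ u ≤ m, coeff u f ≠ 0 := by
  classical
  by_contra! hF
  suffices ∀ u ≤ m, coeff u g = 0 from hm (this m le_rfl)
  clear hm
  induction hg using Submodule.span_induction with
  | mem f hf => exact hF f hf
  | zero => simp
  | add f f' _ _ ihf ihf' => intro u hu; rw [coeff_add, ihf u hu, ihf' u hu, add_zero]
  | smul a f _ ihf =>
    intro u hu
    rw [smul_eq_mul, coeff_mul]
    refine Finset.sum_eq_zero fun ⟨v, w⟩ hvw => ?_
    rw [Finset.HasAntidiagonal.mem_antidiagonal] at hvw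
    rw [ihf w (le_trans (hvw ▸ le_add_self) hu), mul_zero]

theorem map_toMultiset_eq_of_rename_monomial_sub_monomial_eq_zero [CommRing R] [Nontrivial R]
    {π : σ → τ} {a b : σ →₀ ℕ} (h : rename π (monomial a 1 - monomial b 1 : MvPolynomial σ R) = 0) :
    (Finsupp.toMultiset a).map π = (Finsupp.toMultiset b).map π := by
  rw [map_sub, rename_monomial, rename_monomial, sub_eq_zero,
    monomial_left_inj one_ne_zero] at h
  rw [Finsupp.toMultiset_map, Finsupp.toMultiset_map, h]

end MvPolynomial

section BinomialEdgeIdeal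

open Finsupp

variable {K : Type} [Field K] {n : ℕ} {G : SimpleGraph (Fin n)}

noncomputable def diagExp (G : SimpleGraph (Fin n)) (i j : Fin n) : VarSet n G →₀ ℕ :=
  single ⟨(i, i), Or.inl rfl⟩ 1 + single ⟨(j, j), Or.inl rfl⟩ 1

noncomputable def crossExp {i j : Fin n} (h : G.Adj i j) : VarSet n G →₀ ℕ :=
  single ⟨(i, j), Or.inr h⟩ 1 + single ⟨(j, i), Or.inr h.symm⟩ 1

theorem fij_eq_monomial_sub_monomial {i j : Fin n} (h : G.Adj i j) :
    fij K h = monomial (diagExp G i j) 1 - monomial (crossExp h) 1 := by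
  simp only [fij, X, monomial_mul, one_mul, diagExp, crossExp]

theorem diagExp_ne_crossExp {i j : Fin n} (h : G.Adj i j) : diagExp G i j ≠ crossExp h := by
  intro e
  simpa [diagExp, crossExp, single_apply, h.ne] using DFunLike.congr_fun e ⟨(i, i), Or.inl rfl⟩

theorem isBinomial_fij {i j : Fin n} (h : G.Adj i j) : IsBinomial K (fij K h) :=
  ⟨_, _, diagExp_ne_crossExp h, fij_eq_monomial_sub_monomial h⟩

theorem fij_mem_PG {i j : Fin n} (h : G.Adj i j) : fij K h ∈ PG K n G := by
  rcases lt_or_gt_of_ne h.ne with hij | hji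
  · exact Ideal.subset_span ⟨i, j, h, hij, rfl⟩
  · have : fij K h = fij K h.symm := by simp only [fij]; ring
    exact this ▸ Ideal.subset_span ⟨j, i, h.symm, hji, rfl⟩

/-- `P_G` is homogeneous for the row grading and for the column grading of the variables. -/
theorem rename_eq_zero_of_mem_PG {π : Fin n × Fin n → Fin n} (hπ : π = Prod.fst ∨ π = Prod.snd)
    {f : MvPolynomial (VarSet n G) K} (hf : f ∈ PG K n G) :
    rename (π ∘ Subtype.val) f = 0 := by
  suffices PG K n G ≤ RingHom.ker (rename (R := K) (π ∘ Subtype.val)) from this hf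
  refine Ideal.span_le.mpr ?_
  rintro _ ⟨i, j, h, -, rfl⟩
  rcases hπ with rfl | rfl <;> simp [fij, mul_comm]

theorem map_val_toMultiset_diagExp (i j : Fin n) :
    (toMultiset (diagExp G i j)).map Subtype.val = {(i, i), (j, j)} := by
  simp [diagExp, toMultiset_add, toMultiset_single, Multiset.singleton_add]

theorem map_val_toMultiset_crossExp {i j : Fin n} (h : G.Adj i j) :
    (toMultiset (crossExp h)).map Subtype.val = {(i, j), (j, i)} := by
  simp [crossExp, toMultiset_add, toMultiset_single, Multiset.singleton_add]

theorem eq_diagExp_and_eq_crossExp_of_mem_PG {i j : Fin n} (h : G.Adj i j)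
    {a b : VarSet n G →₀ ℕ} (hm : (monomial a 1 - monomial b 1 : MvPolynomial _ K) ∈ PG K n G)
    (hab : a ≠ b) (ha : a ≤ diagExp G i j) :
    a = diagExp G i j ∧ b = crossExp h := by
  classical
  have hval : Function.Injective fun e : VarSet n G →₀ ℕ => (toMultiset e).map Subtype.val :=
    (Multiset.map_injective Subtype.val_injective).comp
      (Function.LeftInverse.injective (g := Multiset.toFinsupp) toMultiset_toFinsupp)
  have margins (π : Fin n × Fin n → Fin n) (hπ : π = Prod.fst ∨ π = Prod.snd) :
      ((toMultiset a).map Subtype.val).map π = ((toMultiset b).map Subtype.val).map π := by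
    simpa only [Multiset.map_map] using
      map_toMultiset_eq_of_rename_monomial_sub_monomial_eq_zero (rename_eq_zero_of_mem_PG hπ hm)
  have hle : (toMultiset a).map Subtype.val ≤ {(i, i), (j, j)} :=
    map_val_toMultiset_diagExp (G := G) i j ▸
      Multiset.map_le_map (toMultiset_strictMono.monotone ha)
  obtain ⟨hda, hcb⟩ := Multiset.eq_diag_and_eq_cross_of_map_fst_eq_of_map_snd_eq hle
    (hval.ne hab) (margins _ (Or.inl rfl)) (margins _ (Or.inr rfl))
  exact ⟨hval (hda.trans (map_val_toMultiset_diagExp i j).symm),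
    hval (hcb.trans (map_val_toMultiset_crossExp h).symm)⟩

theorem fij_mem_or_neg_fij_mem_of_span_eq {F : Set (MvPolynomial (VarSet n G) K)}
    (hF : ∀ f ∈ F, IsBinomial K f) (hspan : Ideal.span F = PG K n G) {i j : Fin n}
    (h : G.Adj i j) : fij K h ∈ F ∨ -fij K h ∈ F := by
  classical
  have hcoeff : coeff (diagExp G i j) (fij K h) ≠ 0 := by
    simp [fij_eq_monomial_sub_monomial h, coeff_monomial, (diagExp_ne_crossExp h).symm]
  obtain ⟨f, hfF, u, hu, hfu⟩ :=
    exists_mem_le_coeff_ne_zero_of_mem_span (hspan ▸ fij_mem_PG h) hcoeff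
  obtain ⟨a, b, hab, rfl⟩ := hF f hfF
  have hmem : (monomial a 1 - monomial b 1 : MvPolynomial _ K) ∈ PG K n G :=
    hspan ▸ Ideal.subset_span hfF
  have hua : u = a ∨ u = b := by
    by_contra! hne
    simp [coeff_monomial, Ne.symm hne.1, Ne.symm hne.2] at hfu
  rcases hua with rfl | rfl
  · obtain ⟨rfl, rfl⟩ := eq_diagExp_and_eq_crossExp_of_mem_PG h hmem hab hu
    rw [fij_eq_monomial_sub_monomial h]
    exact Or.inl hfF
  · have hmem' := neg_mem hmem
    rw [neg_sub] at hmem'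
    obtain ⟨rfl, rfl⟩ := eq_diagExp_and_eq_crossExp_of_mem_PG h hmem' hab.symm hu
    rw [fij_eq_monomial_sub_monomial h, neg_sub]
    exact Or.inr hfF

/-- In characteristic `2` the hypothesis `f_{kl} = -f_{ij}` is satisfiable, so the edges have to
be compared; evaluating at the indicator of `{x_{ii}, x_{jj}}` does this. -/
theorem eq_of_fij_eq_neg_fij {i j k l : Fin n} (h : G.Adj i j) (h' : G.Adj k l) (hij : i < j)
    (hkl : k < l) (e : fij K h' = -fij K h) : k = i ∧ l = j := by
  classical
  let w : VarSet n G → K := fun x => if x.1.1 = x.1.2 ∧ (x.1.1 = i ∨ x.1.1 = j) then 1 else 0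
  have he := congrArg (eval w) e
  simp only [fij, map_sub, map_mul, eval_X, true_and, mul_ite, mul_one, mul_zero, h'.ne,
    false_and, ↓reduceIte, ite_self, sub_zero, neg_sub, h.ne, or_false, and_true, or_true,
    and_self, zero_sub, w] at he
  split_ifs at he with hl hk
  · rcases hk with rfl | rfl <;> rcases hl with rfl | rfl
    · exact absurd hkl (lt_irrefl _)
    · exact ⟨rfl, rfl⟩
    · exact absurd (hij.trans hkl) (lt_irrefl _)
    · exact absurd hkl (lt_irrefl _)
  all_goals exact absurd he.symm (neg_ne_zero.mpr one_ne_zero)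

theorem span_ne_PG_of_ssubset_genSet {F : Set (MvPolynomial (VarSet n G) K)}
    (hF : F ⊂ genSet K n G) : Ideal.span F ≠ PG K n G := by
  intro hspan
  obtain ⟨_, ⟨i, j, h, hij, rfl⟩, hnot⟩ := Set.exists_of_ssubset hF
  have hbin : ∀ f ∈ F, IsBinomial K f := by
    intro f hf
    obtain ⟨k, l, h', -, rfl⟩ := hF.1 hf
    exact isBinomial_fij h'
  refine (fij_mem_or_neg_fij_mem_of_span_eq hbin hspan h).elim hnot fun hneg => hnot ?_
  obtain ⟨k, l, h', hkl, e⟩ := hF.1 hneg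
  obtain ⟨rfl, rfl⟩ := eq_of_fij_eq_neg_fij (K := K) h h' hij hkl e.symm
  exact e ▸ hneg

end BinomialEdgeIdeal

/-- `P_G` has a unique minimal system of binomial generators, namely
`{f_{ij} : {i,j} ∈ E(G), i < j}`: this set generates `P_G`; every set of binomials generating
`P_G` contains each `f_{ij}` up to sign (each `f_{ij}` is indispensable); and no proper subset
of `{f_{ij}}` generates `P_G`. -/
theorem PG_unique_minimal_binomial_generators (K : Type) [Field K] (n : ℕ)
    (G : SimpleGraph (Fin n)) :
    Ideal.span (genSet K n G) = PG K n G
      ∧ (∀ F : Set (MvPolynomial (VarSet n G) K), (∀ f ∈ F, IsBinomial K f) →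
          Ideal.span F = PG K n G →
          ∀ i j : Fin n, ∀ h : G.Adj i j, i < j → (fij K h ∈ F ∨ -fij K h ∈ F))
      ∧ (∀ F : Set (MvPolynomial (VarSet n G) K), F ⊂ genSet K n G →
          Ideal.span F ≠ PG K n G) :=
  ⟨rfl, fun _ hF hspan _ _ h _ => fij_mem_or_neg_fij_mem_of_span_eq hF hspan h,
    fun _ hF => span_ne_PG_of_ssubset_genSet hF⟩
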